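/- Let ξ : Fin s → ℂ with ∑|ξ_i|² = 1 and all ξ_i ≠ 0. The set {ξ} ∪ {f_m : 2 ≤ m ≤ s} (with f_m defined by (f_m)_i = N_m ξ_i conj(ξ_m) for i<m, (f_m)_m = -N_m ∑_{i<m}|ξ_i|², 0 otherwise) is an orthonormal basis of ℂ^s. -/

import Mathlib

noncomputable section
open scoped BigOperators ComplexConjugate InnerProductSpace


/-- The Gram–Schmidt-type kernel-basis vector f_m built from ξ:
(f_m)_i = N_m ξ_i conj(ξ_m) for i < m, (f_m)_m = -N_m ∑_{i<m}|ξ_i|², 0 for i > m,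
N_m = (∑_{i<m}|ξ_i|²)^{-1/2}(∑_{i≤m}|ξ_i|²)^{-1/2}. (0-indexed: paper index m+1.) -/
def gsVec (s : ℕ) (ξ : Fin s → ℂ) (m : Fin s) : EuclideanSpace ℂ (Fin s) :=
  WithLp.toLp 2 fun i =>
    if i < m then
      (((Real.sqrt (∑ j ∈ Finset.univ.filter (· < m), ‖ξ j‖ ^ 2))⁻¹ *
        (Real.sqrt (∑ j ∈ Finset.univ.filter (· ≤ m), ‖ξ j‖ ^ 2))⁻¹ : ℝ) : ℂ) *
        (ξ i * conj (ξ m))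
    else if i = m then
      -((((Real.sqrt (∑ j ∈ Finset.univ.filter (· < m), ‖ξ j‖ ^ 2))⁻¹ *
        (Real.sqrt (∑ j ∈ Finset.univ.filter (· ≤ m), ‖ξ j‖ ^ 2))⁻¹ : ℝ) : ℂ) *
        ((∑ j ∈ Finset.univ.filter (· < m), ‖ξ j‖ ^ 2 : ℝ) : ℂ))
    else 0

namespace GSaux

open Finset

variable {s : ℕ} (ξ : Fin s → ℂ)

def Aq (m : Fin s) : ℝ := ∑ j ∈ Finset.univ.filter (· < m), ‖ξ j‖ ^ 2
def Bq (m : Fin s) : ℝ := ∑ j ∈ Finset.univ.filter (· ≤ m), ‖ξ j‖ ^ 2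
def Nq (m : Fin s) : ℝ := (Real.sqrt (Aq ξ m))⁻¹ * (Real.sqrt (Bq ξ m))⁻¹

lemma gsVec_eq (m i : Fin s) :
    gsVec s ξ m i =
      if i < m then (Nq ξ m : ℂ) * (ξ i * conj (ξ m))
      else if i = m then -((Nq ξ m : ℂ) * (Aq ξ m : ℂ)) else 0 := rfl

lemma conj_sq (z : ℂ) : conj z * z = ((‖z‖ ^ 2 : ℝ) : ℂ) := by
  rw [mul_comm, Complex.mul_conj']
  norm_cast

lemma key (x : Fin s → ℂ) (m : Fin s) :
    ∑ i, conj (x i) * gsVec s ξ m i =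
      (Nq ξ m : ℂ) *
        ((∑ i ∈ Finset.univ.filter (· < m), conj (x i) * ξ i) * conj (ξ m)
          - conj (x m) * (Aq ξ m : ℂ)) := by
  rw [← Finset.sum_filter_add_sum_filter_not Finset.univ (· < m)]
  have h1 : ∑ i ∈ Finset.univ.filter (· < m), conj (x i) * gsVec s ξ m i
      = (Nq ξ m : ℂ) *
          ((∑ i ∈ Finset.univ.filter (· < m), conj (x i) * ξ i) * conj (ξ m)) := by
    rw [Finset.sum_mul, Finset.mul_sum]
    apply Finset.sum_congr rfl
    intro i hi
    simp only [Finset.mem_filter] at hi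
    rw [gsVec_eq, if_pos hi.2]
    ring
  have h2 : ∑ i ∈ Finset.univ.filter (fun i => ¬ i < m), conj (x i) * gsVec s ξ m i
      = conj (x m) * (-((Nq ξ m : ℂ) * (Aq ξ m : ℂ))) := by
    rw [Finset.sum_eq_single_of_mem m (by simp)]
    · rw [gsVec_eq, if_neg (lt_irrefl m), if_pos rfl]
    · intro i hi hne
      simp only [Finset.mem_filter, not_lt] at hi
      rw [gsVec_eq, if_neg (not_lt.mpr hi.2), if_neg hne, mul_zero]
  rw [h1, h2]
  ring

lemma sum_conj_xi_mul (m : Fin s) : ∑ i, conj (ξ i) * gsVec s ξ m i = 0 := by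
  rw [key]
  have : (∑ i ∈ Finset.univ.filter (· < m), conj (ξ i) * ξ i) = ((Aq ξ m : ℝ) : ℂ) := by
    rw [Aq, Complex.ofReal_sum]
    exact Finset.sum_congr rfl fun i _ => conj_sq (ξ i)
  rw [this]
  ring

lemma sum_conj_gs_mul_xi (l : Fin s) : ∑ i, conj (gsVec s ξ l i) * ξ i = 0 := by
  have h := sum_conj_xi_mul ξ l
  have h2 : ∑ i, conj (gsVec s ξ l i) * ξ i
      = conj (∑ i, conj (ξ i) * gsVec s ξ l i) := by
    rw [map_sum]
    exact Finset.sum_congr rfl fun i _ => by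
      rw [map_mul, RingHomCompTriple.comp_apply, RingHom.id_apply, mul_comm]
  rw [h2, h, map_zero]

lemma gsVec_zero_of_lt (l i : Fin s) (h : l < i) : gsVec s ξ l i = 0 := by
  rw [gsVec_eq, if_neg (not_lt.mpr h.le), if_neg (Fin.ne_of_gt h)]

lemma cross {l m : Fin s} (h : l < m) :
    ∑ i, conj (gsVec s ξ l i) * gsVec s ξ m i = 0 := by
  rw [key]
  have h1 : (∑ i ∈ Finset.univ.filter (· < m), conj (gsVec s ξ l i) * ξ i)
      = ∑ i, conj (gsVec s ξ l i) * ξ i := by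
    apply Finset.sum_subset (Finset.subset_univ _)
    intro i _ hi
    simp only [Finset.mem_filter, Finset.mem_univ, true_and, not_lt] at hi
    rw [gsVec_zero_of_lt ξ l i (lt_of_lt_of_le h hi), map_zero, zero_mul]
  rw [h1, sum_conj_gs_mul_xi, gsVec_zero_of_lt ξ l m h, map_zero]
  ring

lemma cross' {l m : Fin s} (h : m < l) :
    ∑ i, conj (gsVec s ξ l i) * gsVec s ξ m i = 0 := by
  have h2 : ∑ i, conj (gsVec s ξ l i) * gsVec s ξ m i
      = conj (∑ i, conj (gsVec s ξ m i) * gsVec s ξ l i) := by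
    rw [map_sum]
    exact Finset.sum_congr rfl fun i _ => by
      rw [map_mul, RingHomCompTriple.comp_apply, RingHom.id_apply, mul_comm]
  rw [h2, cross ξ h, map_zero]

lemma B_eq (m : Fin s) : Bq ξ m = ‖ξ m‖ ^ 2 + Aq ξ m := by
  have hset : Finset.univ.filter (· ≤ m) = insert m (Finset.univ.filter (· < m)) := by
    ext i
    simp [le_iff_lt_or_eq, or_comm]
  rw [Bq, hset, Finset.sum_insert (by simp), Aq]

lemma A_pos (hnz : ∀ i, ξ i ≠ 0) (m : Fin s) (hm : (m : ℕ) ≠ 0) : 0 < Aq ξ m := by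
  have hs : 0 < s := m.pos
  have h0 : (⟨0, hs⟩ : Fin s) ∈ Finset.univ.filter (· < m) := by
    simp only [Finset.mem_filter, Finset.mem_univ, true_and]
    rw [Fin.lt_def]
    exact Nat.pos_of_ne_zero hm
  refine Finset.sum_pos' (fun i _ => sq_nonneg _) ⟨_, h0, ?_⟩
  exact pow_pos (norm_pos_iff.mpr (hnz ⟨0, hs⟩)) 2

lemma B_pos (hnz : ∀ i, ξ i ≠ 0) (m : Fin s) : 0 < Bq ξ m := by
  have h0 : m ∈ Finset.univ.filter (· ≤ m) := by simp
  refine Finset.sum_pos' (fun i _ => sq_nonneg _) ⟨_, h0, ?_⟩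
  exact pow_pos (norm_pos_iff.mpr (hnz m)) 2

lemma norm_one (hnz : ∀ i, ξ i ≠ 0) (m : Fin s) (hm : (m : ℕ) ≠ 0) :
    ∑ i, conj (gsVec s ξ m i) * gsVec s ξ m i = 1 := by
  have hA := A_pos ξ hnz m hm
  have hB := B_pos ξ hnz m
  rw [key]
  have h1 : (∑ i ∈ Finset.univ.filter (· < m), conj (gsVec s ξ m i) * ξ i)
      = (Nq ξ m : ℂ) * (Aq ξ m : ℂ) * ξ m := by
    rw [Aq, Complex.ofReal_sum, Finset.mul_sum, Finset.sum_mul]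
    apply Finset.sum_congr rfl
    intro i hi
    simp only [Finset.mem_filter] at hi
    rw [gsVec_eq, if_pos hi.2, map_mul, map_mul, Complex.conj_ofReal,
      RingHomCompTriple.comp_apply, RingHom.id_apply]
    rw [← conj_sq (ξ i)]
    ring
  rw [h1, gsVec_eq, if_neg (lt_irrefl m), if_pos rfl, map_neg, map_mul,
    Complex.conj_ofReal, Complex.conj_ofReal]
  have hmm : ξ m * conj (ξ m) = ((‖ξ m‖ ^ 2 : ℝ) : ℂ) := by
    rw [Complex.mul_conj']; norm_cast
  have hNAB : (Nq ξ m) ^ 2 * ((Aq ξ m) * (Bq ξ m)) = 1 := by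
    rw [Nq, mul_pow, inv_pow, inv_pow, Real.sq_sqrt hA.le, Real.sq_sqrt hB.le]
    field_simp
  have hNABc : ((Nq ξ m : ℂ)) ^ 2 * ((Aq ξ m : ℂ) * (Bq ξ m : ℂ)) = 1 := by
    exact_mod_cast hNAB
  have hBc : ((Bq ξ m : ℝ) : ℂ) = ((‖ξ m‖ ^ 2 : ℝ) : ℂ) + ((Aq ξ m : ℝ) : ℂ) := by
    rw [B_eq]; push_cast; ring
  linear_combination ((Nq ξ m : ℂ)) ^ 2 * (Aq ξ m : ℂ) * hmm + hNABc
    - ((Nq ξ m : ℂ)) ^ 2 * (Aq ξ m : ℂ) * hBc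

end GSaux

/-- {ξ} ∪ {f_m : 1 ≤ m} is an orthonormal basis of ℂ^s. -/
theorem stmt4 (s : ℕ) (ξ : EuclideanSpace ℂ (Fin s))
    (hξ : ∑ i, ‖ξ i‖ ^ 2 = 1) (hnz : ∀ i, ξ i ≠ 0) :
    Orthonormal ℂ (fun m : Fin s => if (m : ℕ) = 0 then ξ else gsVec s ξ m) ∧
    Submodule.span ℂ
      (Set.range (fun m : Fin s => if (m : ℕ) = 0 then ξ else gsVec s ξ m)) = ⊤ := by
  open GSaux in
  have inner_eq : ∀ x y : EuclideanSpace ℂ (Fin s), ⟪x, y⟫_ℂ = ∑ i, conj (x i) * y i := by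
    intro x y
    simp [PiLp.inner_apply, RCLike.inner_apply]
    exact Finset.sum_congr rfl fun i _ => mul_comm _ _
  have hxx : (⟪ξ, ξ⟫_ℂ : ℂ) = 1 := by
    rw [inner_eq]
    have : ∀ i : Fin s, conj (ξ i) * ξ i = ((‖ξ i‖ ^ 2 : ℝ) : ℂ) := fun i => conj_sq (ξ i)
    rw [Finset.sum_congr rfl fun i _ => this i, ← Complex.ofReal_sum, hξ]
    norm_cast
  have horth : Orthonormal ℂ (fun m : Fin s => if (m : ℕ) = 0 then ξ else gsVec s ξ m) := by
    rw [orthonormal_iff_ite]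
    intro l m
    by_cases hl : (l : ℕ) = 0 <;> by_cases hm : (m : ℕ) = 0
    · have : l = m := Fin.ext (hl.trans hm.symm)
      subst this
      simp only [if_pos hl, if_pos rfl]
      exact hxx
    · have hne : l ≠ m := fun h => hm (h ▸ hl)
      simp only [if_pos hl, if_neg hm, if_neg hne]
      rw [inner_eq]
      exact sum_conj_xi_mul ξ m
    · have hne : l ≠ m := fun h => hl (h ▸ hm)
      simp only [if_neg hl, if_pos hm, if_neg hne]
      rw [inner_eq]
      exact sum_conj_gs_mul_xi ξ l
    · simp only [if_neg hl, if_neg hm]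
      rcases lt_trichotomy l m with h | h | h
      · rw [if_neg (ne_of_lt h), inner_eq]
        exact cross ξ h
      · subst h
        rw [if_pos rfl, inner_eq]
        exact norm_one ξ hnz l hl
      · rw [if_neg (ne_of_gt h), inner_eq]
        exact cross' ξ h
  refine ⟨horth, ?_⟩
  exact horth.linearIndependent.span_eq_top_of_card_eq_finrank'
    (by simp [finrank_euclideanSpace_fin])

end
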